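/- With the Bergman metric on the Siegel upper half-space ℍₙ as in the explicit matrix formula, for any p, v ∈ ℂ^{n-1} and z = (z₁, z̃) ∈ ℍₙ one has ‖(2i⟨p,v⟩, v)‖²_{ℍₙ,z} = 4(‖v‖²·|u_{ℍₙ}(z)| + |⟨p - z̃, v⟩|²)/u_{ℍₙ}(z)², where ⟨a,b⟩ = āᵀb and u_{ℍₙ}(z) = -Im z₁ + ‖z̃‖². -/

import Mathlib

/-!
Writing `S = ⟪z̃, w̃⟫` and `u = -Im z₁ + ‖z̃‖²`, the coefficients of the metric assemble into
`u² ‖w‖²_z = |w₁ - 2iS|² - 4u‖w̃‖²`: the mixed terms complete the square, and the diagonal and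
off-diagonal blocks combine into `(Im z₁ - ‖z̃‖²)‖w̃‖² + |S|²`. For `w = (2i⟨p,v⟩, v)` the first
term is `4|⟨p - z̃, v⟩|²`, and `u < 0` on `ℍₙ` turns `-u` into `|u|`.
-/

open Complex
open scoped InnerProductSpace

/-- The squared Bergman/Kobayashi norm `wᵀ (g_{j,k}) w̄` of a tangent vector
`w = (w₁, w̃)` at `z = (z₁, z̃)` in the Siegel upper half-space, with
`u = -Im z₁ + ‖z̃‖²`, `g_{1,1} = 1/u²`, `g_{1,k} = 2i z_k/u²`, `g_{j,1} = -2i z̄_j/u²`,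
`g_{j,j} = 4(Im z₁ - Σ_{l≥2,l≠j}|z_l|²)/u²`, `g_{j,k} = 4 z_k z̄_j/u²` (`j≠k`, `j,k≥2`). -/
noncomputable def bergNormSq (m : ℕ) (z w : ℂ × EuclideanSpace ℂ (Fin m)) : ℂ :=
  let u : ℂ := ((-z.1.im + ‖z.2‖ ^ 2 : ℝ) : ℂ)
  (1 / u ^ 2) * (w.1 * (starRingEnd ℂ) w.1)
    + ∑ k, (2 * I * z.2 k / u ^ 2) * (w.1 * (starRingEnd ℂ) (w.2 k))
    + ∑ j, (-(2 * I * (starRingEnd ℂ) (z.2 j)) / u ^ 2) * (w.2 j * (starRingEnd ℂ) w.1)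
    + ∑ j, ((4 * ((z.1.im : ℝ) - ∑ l ∈ Finset.univ.erase j, ‖z.2 l‖ ^ 2) : ℝ) / u ^ 2)
        * (w.2 j * (starRingEnd ℂ) (w.2 j))
    + ∑ j, ∑ k ∈ Finset.univ.erase j,
        (4 * z.2 k * (starRingEnd ℂ) (z.2 j) / u ^ 2) * (w.2 j * (starRingEnd ℂ) (w.2 k))

open Finset
open scoped ComplexConjugate

namespace EuclideanSpace

variable {ι : Type*} [Fintype ι]

lemma inner_eq_sum_conj_mul (x y : EuclideanSpace ℂ ι) :
    ⟪x, y⟫_ℂ = ∑ j, conj (x j) * y j := by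
  simp [PiLp.inner_apply, mul_comm]

lemma conj_inner_eq_sum_mul_conj (x y : EuclideanSpace ℂ ι) :
    conj ⟪x, y⟫_ℂ = ∑ j, x j * conj (y j) := by
  simp [inner_eq_sum_conj_mul]

lemma ofReal_norm_sq_eq_sum_mul_conj (x : EuclideanSpace ℂ ι) :
    ((‖x‖ ^ 2 : ℝ) : ℂ) = ∑ j, x j * conj (x j) := by
  simp [EuclideanSpace.norm_sq_eq, Complex.mul_conj']

lemma sum_diag_add_sum_offDiag [DecidableEq ι] (t : ℝ) (x y : EuclideanSpace ℂ ι) :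
    ∑ j, ((t - ∑ l ∈ univ.erase j, ‖x l‖ ^ 2 : ℝ) : ℂ) * (y j * conj (y j))
      + ∑ j, ∑ k ∈ univ.erase j, x k * conj (x j) * (y j * conj (y k))
      = ((t - ‖x‖ ^ 2 : ℝ) : ℂ) * ((‖y‖ ^ 2 : ℝ) : ℂ) + ((‖⟪x, y⟫_ℂ‖ ^ 2 : ℝ) : ℂ) := by
  have hdiag (j : ι) : ((t - ∑ l ∈ univ.erase j, ‖x l‖ ^ 2 : ℝ) : ℂ)
      = ((t - ‖x‖ ^ 2 : ℝ) : ℂ) + x j * conj (x j) := by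
    rw [sum_erase_eq_sub (mem_univ j), ← EuclideanSpace.norm_sq_eq, Complex.mul_conj']
    push_cast; ring
  have hinner : ((‖⟪x, y⟫_ℂ‖ ^ 2 : ℝ) : ℂ) = ∑ j, ∑ k, x k * conj (x j) * (y j * conj (y k)) := by
    rw [Complex.ofReal_pow, ← Complex.mul_conj', conj_inner_eq_sum_mul_conj,
      inner_eq_sum_conj_mul, sum_mul_sum]
    exact sum_congr rfl fun j _ => sum_congr rfl fun k _ => by ring
  simp only [hdiag, add_mul, sum_add_distrib]
  simp only [sum_erase_eq_sub (mem_univ _), sum_sub_distrib, hinner,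
    ofReal_norm_sq_eq_sum_mul_conj, mul_sum]
  ring

end EuclideanSpace

open EuclideanSpace

-- At `u = 0` both sides are the junk value `x / 0 = 0`.
theorem bergNormSq_eq (m : ℕ) (z w : ℂ × EuclideanSpace ℂ (Fin m)) :
    bergNormSq m z w = ((‖w.1 - 2 * I * ⟪z.2, w.2⟫_ℂ‖ ^ 2
      - 4 * (-z.1.im + ‖z.2‖ ^ 2) * ‖w.2‖ ^ 2) / (-z.1.im + ‖z.2‖ ^ 2) ^ 2 : ℝ) := by
  obtain ⟨⟨z₁, z⟩, ⟨w₁, w⟩⟩ := z, w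
  simp only [bergNormSq]
  set u : ℝ := -z₁.im + ‖z‖ ^ 2 with hu
  have hmixed₁ : ∑ k, (2 * I * z k / (u : ℂ) ^ 2) * (w₁ * conj (w k))
      = 2 * I * w₁ * conj ⟪z, w⟫_ℂ / (u : ℂ) ^ 2 := by
    rw [conj_inner_eq_sum_mul_conj, mul_sum, sum_div]
    exact sum_congr rfl fun k _ => by ring
  have hmixed₂ : ∑ j, (-(2 * I * conj (z j)) / (u : ℂ) ^ 2) * (w j * conj w₁)
      = -2 * I * conj w₁ * ⟪z, w⟫_ℂ / (u : ℂ) ^ 2 := by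
    rw [inner_eq_sum_conj_mul, mul_sum, sum_div]
    exact sum_congr rfl fun k _ => by ring
  have hquad : ∑ j, ((4 * (z₁.im - ∑ l ∈ univ.erase j, ‖z l‖ ^ 2) : ℝ) / (u : ℂ) ^ 2)
        * (w j * conj (w j))
      + ∑ j, ∑ k ∈ univ.erase j, (4 * z k * conj (z j) / (u : ℂ) ^ 2) * (w j * conj (w k))
      = 4 * (((-u : ℝ) : ℂ) * ((‖w‖ ^ 2 : ℝ) : ℂ) + ((‖⟪z, w⟫_ℂ‖ ^ 2 : ℝ) : ℂ)) / (u : ℂ) ^ 2 := by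
    have hu' : z₁.im - ‖z‖ ^ 2 = -u := by rw [hu]; ring
    rw [← hu', ← sum_diag_add_sum_offDiag, mul_add, add_div, mul_sum, mul_sum,
      sum_div, sum_div]
    congr 1
    · exact sum_congr rfl fun j _ => by push_cast; ring
    · refine sum_congr rfl fun j _ => ?_
      rw [mul_sum, sum_div]
      exact sum_congr rfl fun k _ => by ring
  rw [add_assoc _ (∑ j, _), hquad, hmixed₁, hmixed₂]
  push_cast
  rw [← Complex.mul_conj', ← Complex.mul_conj']
  simp only [map_sub, map_mul, map_ofNat, conj_I]
  linear_combination (4 * ⟪z, w⟫_ℂ * conj ⟪z, w⟫_ℂ / u ^ 2) * I_sq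

theorem bergNormSq_orthogonal_part (m : ℕ) (z : ℂ × EuclideanSpace ℂ (Fin m))
    (hz : ‖z.2‖ ^ 2 < z.1.im) (p v : EuclideanSpace ℂ (Fin m)) :
    bergNormSq m z (2 * I * ⟪p, v⟫_ℂ, v) =
      ((4 * (‖v‖ ^ 2 * |(-z.1.im + ‖z.2‖ ^ 2 : ℝ)| + ‖⟪p - z.2, v⟫_ℂ‖ ^ 2)
        / (-z.1.im + ‖z.2‖ ^ 2) ^ 2 : ℝ) : ℂ) := by
  have hfirst : 2 * I * ⟪p, v⟫_ℂ - 2 * I * ⟪z.2, v⟫_ℂ = 2 * I * ⟪p - z.2, v⟫_ℂ := by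
    rw [inner_sub_left]; ring
  rw [bergNormSq_eq, hfirst, norm_mul, norm_mul, Complex.norm_I, Complex.norm_two,
    abs_of_neg (by linarith)]
  congr 1
  ring
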